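/- arXiv:2010.02912 — 10 statements merged into one kernel-verified Lean document; each statement's English description precedes it below -/
import Mathlib

section
/- If f : 2^[n] → ℝ satisfies the ε-approximate cross-second-order-derivative constraints, i.e., f(A∪{a₁}) + f(A∪{a₂}) ≥ f(A∪{a₁,a₂}) + f(A) − ε for every A ⊆ [n] and distinct a₁,a₂ ∉ A, then the function g(S) = f(S) + ε·((1/8)·⌈n²/2⌉ − (1/2)·(|S| − n/2)²) is submodular, i.e., g(A)+g(B) ≥ g(A∪B)+g(A∩B) for all A,B ⊆ [n]. -/
lemma marg_aux {n : ℕ} (ε : ℝ) (f : Finset (Fin n) → ℝ)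
    (hf : ∀ (A : Finset (Fin n)) (a₁ a₂ : Fin n), a₁ ≠ a₂ → a₁ ∉ A → a₂ ∉ A →
      f (insert a₁ A) + f (insert a₂ A) ≥ f (insert a₁ (insert a₂ A)) + f A - ε) :
    ∀ (k : ℕ) (B A : Finset (Fin n)), (B \ A).card = k → A ⊆ B → ∀ a ∉ B,
      f (insert a B) + f A ≤ f (insert a A) + f B + ε * k := by
  intro k
  induction k with
  | zero =>
    intro B A hcard hAB a ha
    have hBA : B ⊆ A := by
      rwa [Finset.card_eq_zero, Finset.sdiff_eq_empty_iff_subset] at hcard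
    have : A = B := Finset.Subset.antisymm hAB hBA
    subst this
    simp
  | succ k ih =>
    intro B A hcard hAB a ha
    have hne : (B \ A).Nonempty := by
      rw [← Finset.card_pos, hcard]; omega
    obtain ⟨b, hb⟩ := hne
    have hbB : b ∈ B := (Finset.mem_sdiff.mp hb).1
    have hbA : b ∉ A := (Finset.mem_sdiff.mp hb).2
    set B' := B.erase b with hB'
    have hAB' : A ⊆ B' := fun x hx => Finset.mem_erase.mpr ⟨fun h => hbA (h ▸ hx), hAB hx⟩
    have hcard' : (B' \ A).card = k := by
      have : B' \ A = (B \ A).erase b := by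
        ext x; simp [Finset.mem_erase, Finset.mem_sdiff, hB']; tauto
      rw [this, Finset.card_erase_of_mem hb, hcard]; omega
    have haB' : a ∉ B' := fun h => ha (Finset.mem_of_mem_erase h)
    have hbB' : b ∉ B' := Finset.notMem_erase b B
    have hab : a ≠ b := fun h => ha (h ▸ hbB)
    have hins : insert b B' = B := Finset.insert_erase hbB
    have h1 := hf B' a b hab haB' hbB'
    rw [hins] at h1
    have h2 := ih B' A hcard' hAB' a haB'
    push_cast
    linarith

lemma submod_aux {n : ℕ} (ε : ℝ) (f : Finset (Fin n) → ℝ)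
    (hf : ∀ (A : Finset (Fin n)) (a₁ a₂ : Fin n), a₁ ≠ a₂ → a₁ ∉ A → a₂ ∉ A →
      f (insert a₁ A) + f (insert a₂ A) ≥ f (insert a₁ (insert a₂ A)) + f A - ε) :
    ∀ (k : ℕ) (A B : Finset (Fin n)), (A \ B).card = k →
      f (A ∪ B) + f (A ∩ B) ≤ f A + f B + ε * (((A \ B).card : ℝ) * ((B \ A).card : ℝ)) := by
  intro k
  induction k with
  | zero =>
    intro A B hcard
    have hAB : A ⊆ B := by
      rwa [Finset.card_eq_zero, Finset.sdiff_eq_empty_iff_subset] at hcard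
    rw [Finset.union_eq_right.mpr hAB, Finset.inter_eq_left.mpr hAB, hcard]
    push_cast
    linarith
  | succ k ih =>
    intro A B hcard
    have hne : (A \ B).Nonempty := by
      rw [← Finset.card_pos, hcard]; omega
    obtain ⟨a, haa⟩ := hne
    have haA : a ∈ A := (Finset.mem_sdiff.mp haa).1
    have haB : a ∉ B := (Finset.mem_sdiff.mp haa).2
    set A' := A.erase a with hA'
    have hinsA : insert a A' = A := Finset.insert_erase haA
    have hsd : A' \ B = (A \ B).erase a := by
      ext x; simp [Finset.mem_erase, Finset.mem_sdiff, hA']; tauto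
    have hcard' : (A' \ B).card = k := by
      rw [hsd, Finset.card_erase_of_mem haa, hcard]; omega
    have hBA : B \ A' = B \ A := by
      ext x
      simp only [Finset.mem_sdiff, Finset.mem_erase, hA']
      constructor
      · rintro ⟨hx, h⟩; exact ⟨hx, fun hxA => h ⟨fun he => haB (he ▸ hx), hxA⟩⟩
      · rintro ⟨hx, h⟩; exact ⟨hx, fun hh => h hh.2⟩
    have hsub : A' ⊆ A' ∪ B := Finset.subset_union_left
    have haU : a ∉ A' ∪ B := by
      simp [Finset.mem_union, hA', haB]
    have hUcard : ((A' ∪ B) \ A').card = (B \ A).card := by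
      rw [Finset.union_sdiff_left, hBA]
    have h1 := marg_aux ε f hf ((B \ A).card) (A' ∪ B) A' hUcard hsub a haU
    have hUeq : insert a (A' ∪ B) = A ∪ B := by
      rw [← hinsA, Finset.insert_union]
    have hIeq : A' ∩ B = A ∩ B := by
      ext x
      simp only [Finset.mem_inter, Finset.mem_erase, hA']
      constructor
      · rintro ⟨⟨_, h⟩, hb⟩; exact ⟨h, hb⟩
      · rintro ⟨h, hb⟩; exact ⟨⟨fun he => haB (he ▸ hb), h⟩, hb⟩
    rw [hUeq, hinsA] at h1
    have h2 := ih A' B hcard'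
    rw [hIeq, hcard', hBA] at h2
    rw [hcard]
    push_cast
    push_cast at h2
    nlinarith [h1, h2]

theorem stmt_1 (n : ℕ) (hn : 0 < n) (ε : ℝ) (hε : 0 ≤ ε)
    (f : Finset (Fin n) → ℝ)
    (hf : ∀ (A : Finset (Fin n)) (a₁ a₂ : Fin n), a₁ ≠ a₂ → a₁ ∉ A → a₂ ∉ A →
      f (insert a₁ A) + f (insert a₂ A) ≥ f (insert a₁ (insert a₂ A)) + f A - ε)
    (g : Finset (Fin n) → ℝ)
    (hg : ∀ S, g S = f S + ε * ((1/8) * (⌈(n : ℝ)^2 / 2⌉ : ℤ)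
            - (1/2) * ((S.card : ℝ) - n / 2)^2)) :
    ∀ A B : Finset (Fin n), g A + g B ≥ g (A ∪ B) + g (A ∩ B) := by
  intro A B
  have key := submod_aux ε f hf ((A \ B).card) A B rfl
  have h1 : (A ∩ B).card + (A \ B).card = A.card := Finset.card_inter_add_card_sdiff A B
  have h2 : (A ∩ B).card + (B \ A).card = B.card := by
    rw [Finset.inter_comm]; exact Finset.card_inter_add_card_sdiff B A
  have h3 : (A ∪ B).card + (A ∩ B).card = A.card + B.card :=
    Finset.card_union_add_card_inter A B
  have ha : ((A.card : ℝ)) = ((A ∩ B).card : ℝ) + ((A \ B).card : ℝ) := by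
    exact_mod_cast (h1.symm)
  have hb : ((B.card : ℝ)) = ((A ∩ B).card : ℝ) + ((B \ A).card : ℝ) := by
    exact_mod_cast (h2.symm)
  have hu : (((A ∪ B).card : ℝ)) = ((A ∩ B).card : ℝ) + ((A \ B).card : ℝ) + ((B \ A).card : ℝ) := by
    have h3' : (((A ∪ B).card : ℝ)) + ((A ∩ B).card : ℝ) = (A.card : ℝ) + (B.card : ℝ) := by
      exact_mod_cast h3
    linarith
  have hq : ε * ((1/8) * (⌈(n : ℝ)^2 / 2⌉ : ℤ) - (1/2) * ((A.card : ℝ) - n / 2)^2)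
      + ε * ((1/8) * (⌈(n : ℝ)^2 / 2⌉ : ℤ) - (1/2) * ((B.card : ℝ) - n / 2)^2)
      = ε * ((1/8) * (⌈(n : ℝ)^2 / 2⌉ : ℤ) - (1/2) * (((A ∪ B).card : ℝ) - n / 2)^2)
      + ε * ((1/8) * (⌈(n : ℝ)^2 / 2⌉ : ℤ) - (1/2) * (((A ∩ B).card : ℝ) - n / 2)^2)
      + ε * (((A \ B).card : ℝ) * ((B \ A).card : ℝ)) := by
    rw [ha, hb, hu]; ring
  rw [hg A, hg B, hg (A ∪ B), hg (A ∩ B)]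
  linarith [key, hq]
end

section
/- For every ε-approximately cross-submodular function f on 2^[n], there exists a submodular function g with max_{S⊆[n]} |f(S) − g(S)| ≤ (ε/8)·⌊n²/2⌋. -/
private lemma pair_to_sub {n : ℕ} (g : Finset (Fin n) → ℝ)
    (h : ∀ (A : Finset (Fin n)) (a₁ a₂ : Fin n), a₁ ≠ a₂ → a₁ ∉ A → a₂ ∉ A →
      g (insert a₁ A) + g (insert a₂ A) ≥ g (insert a₁ (insert a₂ A)) + g A) :
    ∀ A B : Finset (Fin n), g A + g B ≥ g (A ∪ B) + g (A ∩ B) := by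
  have step : ∀ (D A : Finset (Fin n)), Disjoint D A → ∀ a, a ∉ A → a ∉ D →
      g (insert a A) - g A ≥ g (insert a (A ∪ D)) - g (A ∪ D) := by
    intro D
    induction D using Finset.induction_on with
    | empty => intro A _ a _ _; simp
    | @insert d D' hd IH =>
      intro A hdisj a ha haD
      have hdA : d ∉ A := Finset.disjoint_left.1 hdisj (Finset.mem_insert_self d D')
      have hdisj' : Disjoint D' A :=
        Finset.disjoint_of_subset_left (Finset.subset_insert d D') hdisj
      have haD' : a ∉ D' := fun h' => haD (Finset.mem_insert_of_mem h')
      have had : a ≠ d := fun h' => haD (h' ▸ Finset.mem_insert_self d D')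
      have IH' := IH A hdisj' a ha haD'
      have hmem1 : a ∉ A ∪ D' := by simp [ha, haD']
      have hmem2 : d ∉ A ∪ D' := by simp [hdA, hd]
      have hp := h (A ∪ D') a d had hmem1 hmem2
      rw [Finset.union_insert]
      linarith
  have ins : ∀ (A B : Finset (Fin n)), A ⊆ B → ∀ a, a ∉ B →
      g (insert a A) - g A ≥ g (insert a B) - g B := by
    intro A B hAB a haB
    have haA : a ∉ A := fun h' => haB (hAB h')
    have haD : a ∉ B \ A := fun h' => haB (Finset.mem_sdiff.1 h').1
    have := step (B \ A) A Finset.sdiff_disjoint a haA haD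
    rwa [Finset.union_sdiff_of_subset hAB] at this
  have lem2 : ∀ (D A B : Finset (Fin n)), A ⊆ B → Disjoint D B →
      g (A ∪ D) - g A ≥ g (B ∪ D) - g B := by
    intro D
    induction D using Finset.induction_on with
    | empty => intro A B _ _; simp
    | @insert d D' hd IH =>
      intro A B hAB hdisj
      have hdisj' : Disjoint D' B :=
        Finset.disjoint_of_subset_left (Finset.subset_insert d D') hdisj
      have hdB : d ∉ B := Finset.disjoint_left.1 hdisj (Finset.mem_insert_self d D')
      have IH' := IH A B hAB hdisj'
      have hsub : A ∪ D' ⊆ B ∪ D' := Finset.union_subset_union_left hAB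
      have hdm : d ∉ B ∪ D' := by simp [hdB, hd]
      have := ins (A ∪ D') (B ∪ D') hsub d hdm
      rw [Finset.union_insert, Finset.union_insert]
      linarith
  intro A B
  have h1 : A ∩ B ⊆ B := Finset.inter_subset_right
  have h2 : Disjoint (A \ B) B := Finset.sdiff_disjoint
  have := lem2 (A \ B) (A ∩ B) B h1 h2
  have e1 : A ∩ B ∪ A \ B = A := by ext x; simp [Finset.mem_union, Finset.mem_inter]; tauto
  rw [e1, Finset.union_sdiff_self_eq_union, Finset.union_comm B A] at this
  linarith

theorem stmt_2 (n : ℕ) (ε : ℝ) (hε : 0 ≤ ε)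
    (f : Finset (Fin n) → ℝ)
    (hf : ∀ (A : Finset (Fin n)) (a₁ a₂ : Fin n), a₁ ≠ a₂ → a₁ ∉ A → a₂ ∉ A →
      f (insert a₁ A) + f (insert a₂ A) ≥ f (insert a₁ (insert a₂ A)) + f A - ε) :
    ∃ g : Finset (Fin n) → ℝ,
      (∀ A B : Finset (Fin n), g A + g B ≥ g (A ∪ B) + g (A ∩ B)) ∧
      ∀ S : Finset (Fin n), |f S - g S| ≤ (ε / 8) * (⌊(n : ℝ)^2 / 2⌋ : ℤ) := by
  set T : ℝ := (ε / 8) * (⌊(n : ℝ)^2 / 2⌋ : ℤ) with hT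
  have hT0 : 0 ≤ T := by
    apply mul_nonneg (by linarith)
    exact_mod_cast Int.floor_nonneg.2 (by positivity)
  set g : Finset (Fin n) → ℝ :=
    fun S => f S + (ε / 2) * (S.card : ℝ) * ((n : ℝ) - S.card) - T with hg
  have hpair : ∀ (A : Finset (Fin n)) (a₁ a₂ : Fin n), a₁ ≠ a₂ → a₁ ∉ A → a₂ ∉ A →
      g (insert a₁ A) + g (insert a₂ A) ≥ g (insert a₁ (insert a₂ A)) + g A := by
    intro A a₁ a₂ hne h1 h2
    have key := hf A a₁ a₂ hne h1 h2
    have h12 : a₁ ∉ insert a₂ A := by simp [hne, h1]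
    have c1 : (insert a₁ A).card = A.card + 1 := Finset.card_insert_of_notMem h1
    have c2 : (insert a₂ A).card = A.card + 1 := Finset.card_insert_of_notMem h2
    have c3 : (insert a₁ (insert a₂ A)).card = A.card + 2 := by
      rw [Finset.card_insert_of_notMem h12, c2]
    simp only [hg, c1, c2, c3]
    push_cast
    nlinarith [key]
  refine ⟨g, pair_to_sub g hpair, ?_⟩
  intro S
  have hsn : (S.card : ℝ) ≤ n := by
    exact_mod_cast (Finset.card_le_univ S).trans_eq (Finset.card_fin n)
  have hs0 : (0 : ℝ) ≤ (S.card : ℝ) := by positivity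
  have hq0 : 0 ≤ (ε / 2) * (S.card : ℝ) * ((n : ℝ) - S.card) := by
    apply mul_nonneg (mul_nonneg (by linarith) hs0); linarith
  have hz : ((2 * (S.card : ℤ) * ((n : ℤ) - S.card) : ℤ) : ℝ) ≤ (n : ℝ)^2 / 2 := by
    push_cast
    nlinarith [sq_nonneg ((n : ℝ) - 2 * S.card)]
  have hzf : (2 * (S.card : ℤ) * ((n : ℤ) - S.card) : ℤ) ≤ ⌊(n : ℝ)^2 / 2⌋ :=
    Int.le_floor.2 hz
  have hzfr : ((2 * (S.card : ℤ) * ((n : ℤ) - S.card) : ℤ) : ℝ) ≤ (⌊(n : ℝ)^2 / 2⌋ : ℤ) := by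
    exact_mod_cast hzf
  have h2T : (ε / 2) * (S.card : ℝ) * ((n : ℝ) - S.card) ≤ 2 * T := by
    rw [hT]
    push_cast at hzfr ⊢
    nlinarith [hzfr]
  have : f S - g S = T - (ε / 2) * (S.card : ℝ) * ((n : ℝ) - S.card) := by
    simp only [hg]; ring
  rw [this, abs_le]
  constructor <;> [linarith; linarith]
end

section
/- The function f : 2^[n] → ℝ defined by f(A) = |A|² satisfies the cross constraints with error exactly 2 (i.e., f(A∪{a₁})+f(A∪{a₂}) ≥ f(A∪{a₁,a₂})+f(A) − 2 for all valid A,a₁,a₂, with equality achieved), while its minimal error for the diminishing-returns constraints is at least 2n−2. -/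
theorem stmt_3 (n : ℕ)
    (f : Finset (Fin n) → ℝ) (hf : ∀ A : Finset (Fin n), f A = (A.card : ℝ)^2) :
    (∀ (A : Finset (Fin n)) (a₁ a₂ : Fin n), a₁ ≠ a₂ → a₁ ∉ A → a₂ ∉ A →
      f (insert a₁ A) + f (insert a₂ A) = f (insert a₁ (insert a₂ A)) + f A - 2) ∧
    (∀ ε : ℝ, 0 ≤ ε →
      (∀ (A B : Finset (Fin n)) (c : Fin n), A ⊂ B → c ∉ B →
        f (insert c A) - f A ≥ f (insert c B) - f B - ε) →
      ε ≥ 2 * n - 2) := by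
  constructor
  · intro A a₁ a₂ hne h1 h2
    have h12 : a₁ ∉ insert a₂ A := by simp [hne, h1]
    rw [hf, hf, hf, hf, Finset.card_insert_of_notMem h1,
      Finset.card_insert_of_notMem h2, Finset.card_insert_of_notMem h12,
      Finset.card_insert_of_notMem h2]
    push_cast
    ring
  · intro ε hε hdim
    rcases le_or_gt n 1 with hn | hn
    · have : (n : ℝ) ≤ 1 := by exact_mod_cast hn
      linarith
    · have hn0 : 0 < n := by omega
      set c : Fin n := ⟨0, hn0⟩
      set B : Finset (Fin n) := {c}ᶜ
      have hcB : c ∉ B := by simp [B]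
      have hBne : B.Nonempty := by
        have : B.card = n - 1 := by
          simp [B, Finset.card_compl]
        rw [← Finset.card_pos, this]; omega
      have hsub : (∅ : Finset (Fin n)) ⊂ B :=
        Finset.empty_ssubset.mpr hBne
      have := hdim ∅ B c hsub hcB
      rw [hf, hf, hf, hf] at this
      have hins : (insert c B).card = n := by
        have : insert c B = Finset.univ := by
          simp [B, Finset.insert_compl_self]
        rw [this, Finset.card_univ, Fintype.card_fin]
      have hB : (B.card : ℝ) = n - 1 := by
        rw [show B.card = n - 1 by simp [B, Finset.card_compl]]
        push_cast [Nat.cast_sub hn0]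
        ring
      rw [hins, hB] at this
      simp at this
      nlinarith [this]
end

section
/- Let S₁,…,S_k be a partition of [n] with |S_i| = t_i ≥ 1, let f : 2^[n] → ℝ be a block function with cardinality representation F (i.e., f(S) = F(|S∩S₁|,…,|S∩S_k|)), and let g : 2^[n] → ℝ be any submodular function. Then max_{S⊆[n]} |f(S) − g(S)| ≥ ν(f), where ν(f) = (1/2)·(∏_{j=1}^k (t_j−1)/t_j)·F(0,…,0) + Σ_{i=1}^k ( (∏_{j=i+1}^k (t_j−1)/t_j)/(2t_i) )·F(1,…,1,t_i,0,…,0) − (1/2)·F(1,…,1), where F(1,…,1,t_i,0,…,0) has i−1 leading 1's, then t_i, then k−i trailing 0's. -/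
/-!
Suppose |f - g| < ν everywhere. Walk through the blocks in order, starting from ∅ and adding
at step i the element x ∈ Sᵢ that maximizes g(B ∪ {x}). Submodularity gives
g(B ∪ {x}) ≥ g(B ∪ Sᵢ)/tᵢ + (1 - 1/tᵢ) g(B), so the final set, which meets every block once,
has g-value at least a convex combination of g(∅) and the g(B ∪ Sᵢ). Replacing each of these
values by the corresponding value F(0,…,0) or F(1,…,1,tᵢ,0,…,0) of f costs less than ν, and
the final set has f-value F(1,…,1); comparing the two bounds contradicts the choice of ν.
-/

open Finset Function

def IsSubmodular {α : Type*} [DecidableEq α] (g : Finset α → ℝ) : Prop :=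
  ∀ A B, g (A ∪ B) + g (A ∩ B) ≤ g A + g B

namespace IsSubmodular

variable {α : Type*} [DecidableEq α] {g : Finset α → ℝ}

lemma add_const (hg : IsSubmodular g) (c : ℝ) : IsSubmodular fun A => g A + c :=
  fun A B => by linarith [hg A B]

lemma add_card_sub_one_mul_le_sum_insert (hg : IsSubmodular g) (B X : Finset α) :
    g (B ∪ X) + (#X - 1 : ℝ) * g B ≤ ∑ x ∈ X, g (insert x B) := by
  induction X using Finset.induction_on with
  | empty => simp
  | @insert a X ha ih =>
    have hsub := hg (insert a B) (B ∪ X)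
    have hunion : insert a B ∪ (B ∪ X) = B ∪ insert a X := by grind
    have hinter : insert a B ∩ (B ∪ X) = B := by grind
    rw [hunion, hinter] at hsub
    rw [sum_insert ha, card_insert_of_notMem ha]
    push_cast
    linarith

lemma exists_mem_le_insert (hg : IsSubmodular g) (B : Finset α) {X : Finset α}
    (hX : X.Nonempty) :
    ∃ x ∈ X, g (B ∪ X) / #X + (#X - 1 : ℝ) / #X * g B ≤ g (insert x B) := by
  obtain ⟨x, hx, hmax⟩ := exists_max_image X (fun y => g (insert y B)) hX
  refine ⟨x, hx, ?_⟩
  have hsum : ∑ y ∈ X, g (insert y B) ≤ #X * g (insert x B) := by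
    simpa using sum_le_card_nsmul X _ _ hmax
  have hcard : (0 : ℝ) < #X := by exact_mod_cast hX.card_pos
  rw [div_mul_eq_mul_div, ← add_div, div_le_iff₀ hcard]
  linarith [hg.add_card_sub_one_mul_le_sum_insert B X]

end IsSubmodular

section GreedyChain

variable {α ι : Type*} [DecidableEq α] [LinearOrder ι]

/-- Unrolling `g (B ∪ {x}) ≥ g (B ∪ S a) / t a + (t a - 1) / t a * g B` over `s` in increasing
order, starting from `c` and with `b a` standing for `g (B ∪ S a)`. -/
noncomputable def greedyBound (t : ι → ℝ) (s : Finset ι) (c : ℝ) (b : ι → ℝ) : ℝ :=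
  (∏ j ∈ s, (t j - 1) / t j) * c + ∑ i ∈ s, (∏ j ∈ s with i < j, (t j - 1) / t j) / t i * b i

lemma greedyBound_empty (t : ι → ℝ) (c : ℝ) (b : ι → ℝ) : greedyBound t ∅ c b = c := by
  simp [greedyBound]

lemma greedyBound_insert_of_forall_lt (t : ι → ℝ) (c : ℝ) (b : ι → ℝ) {s : Finset ι} {a : ι}
    (ha : ∀ j ∈ s, j < a) :
    greedyBound t (insert a s) c b = b a / t a + (t a - 1) / t a * greedyBound t s c b := by
  have has : a ∉ s := fun h => lt_irrefl a (ha a h)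
  have htop : (insert a s).filter (fun j => a < j) = ∅ :=
    filter_eq_empty_iff.mpr fun j hj => by grind
  have hbelow : ∀ i ∈ s,
      (insert a s).filter (fun j => i < j) = insert a (s.filter (fun j => i < j)) :=
    fun i hi => by rw [filter_insert, if_pos (ha i hi)]
  rw [greedyBound, greedyBound, prod_insert has, sum_insert has, htop, prod_empty,
    sum_congr rfl fun i hi => by rw [hbelow i hi, prod_insert (by simp [has])]]
  simp only [mul_div_assoc, mul_assoc, ← mul_sum]
  ring

lemma IsSubmodular.exists_greedyBound_le {g : Finset α → ℝ} (hg : IsSubmodular g)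
    {S : ι → Finset α} (hS : Pairwise (Disjoint on S)) {s : Finset ι}
    (hne : ∀ i ∈ s, (S i).Nonempty) {c : ℝ} {b : ι → ℝ} (hc : c ≤ g ∅)
    (hb : ∀ i ∈ s, ∀ B, (∀ j, #(B ∩ S j) = if j ∈ s ∧ j < i then 1 else 0) → b i ≤ g (B ∪ S i)) :
    ∃ B, (∀ j, #(B ∩ S j) = if j ∈ s then 1 else 0) ∧
      greedyBound (fun j => (#(S j) : ℝ)) s c b ≤ g B := by
  induction s using Finset.induction_on_max with
  | empty => exact ⟨∅, by simp, by simpa [greedyBound_empty] using hc⟩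
  | insert a s ha ih =>
    have has : a ∉ s := fun h => lt_irrefl a (ha a h)
    obtain ⟨B, hB, hgB⟩ := ih (fun i hi => hne i (mem_insert_of_mem hi)) fun i hi B' hB' =>
      hb i (mem_insert_of_mem hi) B' fun j => by
        rw [hB']; congr 1; grind
    have hBa : b a ≤ g (B ∪ S a) := hb a (mem_insert_self a s) B fun j => by
      rw [hB]; congr 1; grind
    obtain ⟨x, hx, hgx⟩ := hg.exists_mem_le_insert B (hne a (mem_insert_self a s))
    refine ⟨insert x B, fun j => ?_, ?_⟩
    · rcases eq_or_ne j a with rfl | hja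
      · have : B ∩ S j = ∅ := card_eq_zero.mp (by simp [hB, has])
        simp [insert_inter_of_mem hx, this]
      · rw [insert_inter_of_notMem (disjoint_left.mp (hS hja.symm) hx), hB]
        simp [hja]
    · have hta : (1 : ℝ) ≤ #(S a) := by exact_mod_cast (hne a (mem_insert_self a s)).card_pos
      rw [greedyBound_insert_of_forall_lt _ _ _ ha]
      refine le_trans ?_ hgx
      gcongr

end GreedyChain

lemma card_union_inter_of_pairwiseDisjoint {α ι : Type*} [DecidableEq α] [DecidableEq ι]
    {S : ι → Finset α} (hS : Pairwise (Disjoint on S)) {B : Finset α} {i : ι}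
    (hB : Disjoint B (S i)) (j : ι) :
    #((B ∪ S i) ∩ S j) = #(B ∩ S j) + if j = i then #(S i) else 0 := by
  rw [union_inter_distrib_right,
    card_union_of_disjoint (hB.mono inter_subset_left inter_subset_left)]
  rcases eq_or_ne j i with rfl | hji
  · simp
  · simp [hji, disjoint_iff_inter_eq_empty.mp (hS hji.symm)]

theorem stmt_5_general (n k : ℕ)
    (S : Fin k → Finset (Fin n)) (t : Fin k → ℕ)
    (hcard : ∀ i, (S i).card = t i) (ht : ∀ i, 1 ≤ t i)
    (hdisj : ∀ i j, i ≠ j → Disjoint (S i) (S j))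
    (F : (Fin k → ℕ) → ℝ)
    (f : Finset (Fin n) → ℝ)
    (hf : ∀ A, f A = F (fun i => (A ∩ S i).card))
    (g : Finset (Fin n) → ℝ)
    (hg : ∀ A B : Finset (Fin n), g A + g B ≥ g (A ∪ B) + g (A ∩ B)) :
    ∃ A : Finset (Fin n), |f A - g A| ≥
      (1/2) * (∏ j, ((t j : ℝ) - 1) / (t j)) * F (fun _ => 0)
      + ∑ i, ((∏ j ∈ Finset.univ.filter (fun j => i < j), ((t j : ℝ) - 1) / (t j)) / (2 * (t i : ℝ)))
          * F (fun j => if j < i then 1 else if j = i then t i else 0)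
      - (1/2) * F (fun _ => 1) := by
  by_contra! hclose
  set ν := (1/2) * (∏ j, ((t j : ℝ) - 1) / (t j)) * F (fun _ => 0)
      + ∑ i, ((∏ j ∈ Finset.univ.filter (fun j => i < j), ((t j : ℝ) - 1) / (t j)) / (2 * (t i : ℝ)))
          * F (fun j => if j < i then 1 else if j = i then t i else 0)
      - (1/2) * F (fun _ => 1) with hν
  have hlower : ∀ A, f A < g A + ν := fun A => by linarith [(abs_lt.mp (hclose A)).2]
  have hupper : ∀ A, g A < f A + ν := fun A => by linarith [(abs_lt.mp (hclose A)).1]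
  have hblock : ∀ i, ∀ B', (∀ j, #(B' ∩ S j) = if j ∈ univ ∧ j < i then 1 else 0) →
      (F fun j => if j < i then 1 else if j = i then t i else 0) ≤ g (B' ∪ S i) + ν := by
    intro i B' hB'
    have hdisjB : Disjoint B' (S i) :=
      disjoint_iff_inter_eq_empty.mpr (card_eq_zero.mp (by simp [hB']))
    have hcards : (fun j => #((B' ∪ S i) ∩ S j)) =
        fun j => if j < i then 1 else if j = i then t i else 0 := by
      funext j
      rw [card_union_inter_of_pairwiseDisjoint hdisj hdisjB, hB', hcard]
      split_ifs <;> simp_all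
    simpa [hf, hcards] using (hlower (B' ∪ S i)).le
  obtain ⟨B, hB, hgB⟩ := (IsSubmodular.add_const hg ν).exists_greedyBound_le (s := univ) hdisj
    (fun i _ => card_pos.mp (hcard i ▸ ht i)) (by simpa [hf] using (hlower ∅).le)
    fun i _ => hblock i
  have hfB : f B = F fun _ => 1 := by simp [hf, hB]
  have hbound : greedyBound (fun j => (#(S j) : ℝ)) univ (F fun _ => 0)
      (fun i => F fun j => if j < i then 1 else if j = i then t i else 0) =
        2 * ν + F fun _ => 1 := by
    simp only [greedyBound, hcard, hν, mul_sub, mul_add, mul_sum]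
    ring_nf
  linarith [hupper B]

theorem stmt_5 (n k : ℕ) (hk : 0 < k)
    (S : Fin k → Finset (Fin n)) (t : Fin k → ℕ)
    (hcard : ∀ i, (S i).card = t i) (ht : ∀ i, 1 ≤ t i)
    (hdisj : ∀ i j, i ≠ j → Disjoint (S i) (S j))
    (hcover : Finset.univ.biUnion S = Finset.univ)
    (F : (Fin k → ℕ) → ℝ)
    (f : Finset (Fin n) → ℝ)
    (hf : ∀ A, f A = F (fun i => (A ∩ S i).card))
    (g : Finset (Fin n) → ℝ)
    (hg : ∀ A B : Finset (Fin n), g A + g B ≥ g (A ∪ B) + g (A ∩ B)) :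
    ∃ A : Finset (Fin n), |f A - g A| ≥
      (1/2) * (∏ j, ((t j : ℝ) - 1) / (t j)) * F (fun _ => 0)
      + ∑ i, ((∏ j ∈ Finset.univ.filter (fun j => i < j), ((t j : ℝ) - 1) / (t j)) / (2 * (t i : ℝ)))
          * F (fun j => if j < i then 1 else if j = i then t i else 0)
      - (1/2) * F (fun _ => 1) :=
  stmt_5_general n k S t hcard ht hdisj F f hf g hg
end

section
/- Let f be a (2,3,…,k+1)-block function on [n_k] with n_k = k(k+3)/2 and cardinality representation F, and let g be any submodular function on 2^[n_k]. Then there exists S ⊆ [n_k] with |f(S) − g(S)| ≥ ( F(0,…,0) + Σ_{i=1}^k F(1,…,1,i+1,0,…,0) ) / (2(k+1)) − F(1,…,1)/2, where F(1,…,1,i+1,0,…,0) has i−1 leading 1's and k−i trailing 0's. -/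
/-!
Build a chain `∅ = L₀ ⊂ L₁ ⊂ ⋯ ⊂ L_k` greedily: `L_{i+1}` adds to `L_i` the element `x` of the
block `S_i` maximizing `g (L_i ∪ {x})`. Submodularity bounds `g (L_i ∪ S_i)` by the sum of the
`i + 2` singleton marginals, each at most the greedy one, so
`g (L_i ∪ S_i) ≤ (i + 2) g (L_{i+1}) - (i + 1) g (L_i)`, and summing telescopes to
`∑ᵢ g (L_i ∪ S_i) ≤ (k + 1) g (L_k) - g ∅`. The block function `f` is `F(0,…,0)` at `∅`,
`F(1,…,1)` at `L_k` and `F(1,…,1,i+2,0,…,0)` at `L_i ∪ S_i`. If `|f - g| < E` held on all these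
sets, adding the bounds at the `L_i ∪ S_i`, at `∅`, and `k + 1` times the one at `L_k` would give
`2(k + 1) E < 2(k + 1) E`.
-/

open Finset Function

section Greedy

variable {α : Type*} [DecidableEq α] {g : Finset α → ℝ}

theorem le_add_sum_marginal_of_submodular (hg : ∀ A B, g A + g B ≥ g (A ∪ B) + g (A ∩ B))
    {A T : Finset α} (hAT : Disjoint A T) :
    g (A ∪ T) ≤ g A + ∑ y ∈ T, (g (insert y A) - g A) := by
  induction T using Finset.induction_on with
  | empty => simp
  | @insert z T hz ih =>
    have hzA : z ∉ A := fun h => disjoint_left.mp hAT h (mem_insert_self z T)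
    have hsub := hg (A ∪ T) (insert z A)
    rw [show A ∪ T ∪ insert z A = A ∪ insert z T by grind,
      show (A ∪ T) ∩ insert z A = A by grind] at hsub
    rw [sum_insert hz]
    linarith [ih (disjoint_of_subset_right (subset_insert z T) hAT)]

theorem le_card_mul_sub_of_forall_le_insert
    (hg : ∀ A B, g A + g B ≥ g (A ∪ B) + g (A ∩ B))
    {A T : Finset α} {x : α} (hAT : Disjoint A T)
    (hmax : ∀ y ∈ T, g (insert y A) ≤ g (insert x A)) :
    g (A ∪ T) ≤ #T * g (insert x A) - (#T - 1) * g A := by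
  have hsum : ∑ y ∈ T, (g (insert y A) - g A) ≤ #T • (g (insert x A) - g A) :=
    sum_le_card_nsmul _ _ _ fun y hy => by linarith [hmax y hy]
  rw [nsmul_eq_mul] at hsum
  linarith [le_add_sum_marginal_of_submodular hg hAT]

noncomputable def greedyChain (g : Finset α → ℝ) (S : ℕ → Finset α) : ℕ → Finset α
  | 0 => ∅
  | i + 1 =>
    if h : (S i).Nonempty then
      insert (exists_max_image (S i) (fun y => g (insert y (greedyChain g S i))) h).choose
        (greedyChain g S i)
    else greedyChain g S i

variable {S : ℕ → Finset α}

theorem exists_greedyChain_succ {i : ℕ} (h : (S i).Nonempty) :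
    ∃ x ∈ S i, greedyChain g S (i + 1) = insert x (greedyChain g S i) ∧
      ∀ y ∈ S i, g (insert y (greedyChain g S i)) ≤ g (insert x (greedyChain g S i)) := by
  obtain ⟨hx, hmax⟩ :=
    (exists_max_image (S i) (fun y => g (insert y (greedyChain g S i))) h).choose_spec
  exact ⟨_, hx, by rw [greedyChain, dif_pos h], hmax⟩

theorem card_greedyChain_inter (hS : Pairwise (Disjoint on S)) {i : ℕ}
    (hne : ∀ j < i, (S j).Nonempty) (j : ℕ) :
    #(greedyChain g S i ∩ S j) = if j < i then 1 else 0 := by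
  induction i with
  | zero => simp [greedyChain]
  | succ i ih =>
    obtain ⟨x, hx, hsucc, -⟩ := exists_greedyChain_succ (g := g) (hne i i.lt_succ_self)
    have ih := ih fun j hj => hne j (by omega)
    rw [hsucc]
    rcases eq_or_ne j i with rfl | hji
    · rw [insert_inter_of_mem hx, card_insert_of_notMem, ih] <;> simp_all
    · rw [insert_inter_of_notMem fun hxj => disjoint_left.mp (hS hji.symm) hx hxj, ih]
      grind

theorem card_greedyChain_union_inter (hS : Pairwise (Disjoint on S)) {i : ℕ}
    (hne : ∀ j < i, (S j).Nonempty) (j : ℕ) :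
    #((greedyChain g S i ∪ S i) ∩ S j) = if j < i then 1 else if j = i then #(S i) else 0 := by
  rcases eq_or_ne j i with rfl | hji
  · simp
  · rw [union_inter_distrib_right, disjoint_iff_inter_eq_empty.mp (hS hji.symm), union_empty,
      card_greedyChain_inter hS hne, if_neg hji]

theorem sum_greedyChain_union_le (hg : ∀ A B, g A + g B ≥ g (A ∪ B) + g (A ∩ B))
    (hS : Pairwise (Disjoint on S)) {k : ℕ} (hcard : ∀ i < k, #(S i) = i + 2) :
    ∑ i ∈ range k, g (greedyChain g S i ∪ S i) ≤ (k + 1) * g (greedyChain g S k) - g ∅ := by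
  induction k with
  | zero => simp [greedyChain]
  | succ k ih =>
    have hne : ∀ j < k + 1, (S j).Nonempty := fun j hj => card_pos.mp (by rw [hcard j hj]; omega)
    obtain ⟨x, -, hsucc, hmax⟩ := exists_greedyChain_succ (g := g) (hne k k.lt_succ_self)
    have hdisj : Disjoint (greedyChain g S k) (S k) := by
      rw [disjoint_iff_inter_eq_empty, ← card_eq_zero,
        card_greedyChain_inter hS (fun j hj => hne j (by omega)), if_neg (lt_irrefl k)]
    have hstep := le_card_mul_sub_of_forall_le_insert hg hdisj hmax
    rw [← hsucc, hcard k k.lt_succ_self] at hstep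
    rw [sum_range_succ]
    push_cast at hstep ⊢
    linarith [ih fun i hi => hcard i (by omega)]

end Greedy

theorem exists_chain_card_inter_of_blocks {α : Type*} [DecidableEq α] {k : ℕ}
    (S : Fin k → Finset α) (hcard : ∀ i, #(S i) = i.val + 2) (hS : Pairwise (Disjoint on S))
    {g : Finset α → ℝ} (hg : ∀ A B, g A + g B ≥ g (A ∪ B) + g (A ∩ B)) :
    ∃ L : ℕ → Finset α, (∀ j, #(L k ∩ S j) = 1) ∧
      (∀ i j : Fin k, #((L i ∪ S i) ∩ S j) = if j < i then 1 else if j = i then i.val + 2 else 0) ∧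
      ∑ i : Fin k, g (L i ∪ S i) ≤ (k + 1) * g (L k) - g ∅ := by
  set T : ℕ → Finset α := extend Fin.val S ⊥
  have hT (i : Fin k) : T i = S i := Fin.val_injective.extend_apply S ⊥ i
  have hTdisj : Pairwise (Disjoint on T) :=
    hS.disjoint_extend_bot (Fin.val_injective.factorsThrough _)
  have hTcard : ∀ i < k, #(T i) = i + 2 := fun i hi => by simpa using hT ⟨i, hi⟩ ▸ hcard ⟨i, hi⟩
  have hne : ∀ i < k, (T i).Nonempty := fun i hi => card_pos.mp (by rw [hTcard i hi]; omega)
  refine ⟨greedyChain g T, fun j => ?_, fun i j => ?_, ?_⟩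
  · rw [← hT j, card_greedyChain_inter hTdisj hne, if_pos j.isLt]
  · rw [← hT i, ← hT j, card_greedyChain_union_inter hTdisj (fun j hj => hne j (hj.trans i.isLt)),
      hTcard i i.isLt]
    simp [Fin.ext_iff]
  · simpa only [← hT, Fin.sum_univ_eq_sum_range (fun i => g (greedyChain g T i ∪ T i))]
      using sum_greedyChain_union_le hg hTdisj hTcard

theorem stmt_6_general (k : ℕ)
    (S : Fin k → Finset (Fin (k * (k + 3) / 2)))
    (hcard : ∀ i, (S i).card = i.val + 2)
    (hdisj : ∀ i j, i ≠ j → Disjoint (S i) (S j))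
    (F : (Fin k → ℕ) → ℝ)
    (f : Finset (Fin (k * (k + 3) / 2)) → ℝ)
    (hf : ∀ A, f A = F (fun i => (A ∩ S i).card))
    (g : Finset (Fin (k * (k + 3) / 2)) → ℝ)
    (hg : ∀ A B, g A + g B ≥ g (A ∪ B) + g (A ∩ B)) :
    ∃ A, |f A - g A| ≥
      (F (fun _ => 0)
        + ∑ i, F (fun j => if j < i then 1 else if j = i then i.val + 2 else 0))
        / (2 * ((k : ℝ) + 1))
      - F (fun _ => 1) / 2 := by
  obtain ⟨L, hLk, hLS, hsum⟩ := exists_chain_card_inter_of_blocks S hcard hdisj hg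
  by_contra! hlt
  set E := (F (fun _ => 0)
        + ∑ i, F (fun j => if j < i then 1 else if j = i then i.val + 2 else 0))
        / (2 * ((k : ℝ) + 1))
      - F (fun _ => 1) / 2 with hE
  have hempty : F (fun _ => 0) - E < g ∅ := by
    have := abs_sub_lt_iff.mp (hlt ∅)
    simp only [hf, empty_inter, card_empty] at this
    linarith
  have hfull : g (L k) < F (fun _ => 1) + E := by
    have := abs_sub_lt_iff.mp (hlt (L k))
    simp only [hf, hLk] at this
    linarith
  have hblocks : ∑ i, (F (fun j => if j < i then 1 else if j = i then i.val + 2 else 0) - E) ≤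
      ∑ i : Fin k, g (L i ∪ S i) := sum_le_sum fun i _ => by
    have := abs_sub_lt_iff.mp (hlt (L i ∪ S i))
    simp only [hf, hLS i] at this
    linarith
  rw [sum_sub_distrib, sum_const, card_univ, Fintype.card_fin, nsmul_eq_mul] at hblocks
  have hpos : (0 : ℝ) < k + 1 := by positivity
  have hE2 : 2 * ((k : ℝ) + 1) * E = F (fun _ => 0)
      + ∑ i, F (fun j => if j < i then 1 else if j = i then i.val + 2 else 0)
      - (k + 1) * F (fun _ => 1) := by
    rw [hE]; field_simp
  linarith [mul_lt_mul_of_pos_left hfull hpos]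

theorem stmt_6 (k : ℕ) (hk : 0 < k)
    (S : Fin k → Finset (Fin (k * (k + 3) / 2)))
    (hcard : ∀ i, (S i).card = i.val + 2)
    (hdisj : ∀ i j, i ≠ j → Disjoint (S i) (S j))
    (hcover : Finset.univ.biUnion S = Finset.univ)
    (F : (Fin k → ℕ) → ℝ)
    (f : Finset (Fin (k * (k + 3) / 2)) → ℝ)
    (hf : ∀ A, f A = F (fun i => (A ∩ S i).card))
    (g : Finset (Fin (k * (k + 3) / 2)) → ℝ)
    (hg : ∀ A B, g A + g B ≥ g (A ∪ B) + g (A ∩ B)) :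
    ∃ A, |f A - g A| ≥
      (F (fun _ => 0)
        + ∑ i, F (fun j => if j < i then 1 else if j = i then i.val + 2 else 0))
        / (2 * ((k : ℝ) + 1))
      - F (fun _ => 1) / 2 :=
  stmt_6_general k S hcard hdisj F f hf g hg
end

section
/- The function f_k of the lower-bound construction is 1-approximately submodular: for all A,B ⊆ [n_k], f_k(A) + f_k(B) ≥ f_k(A∪B) + f_k(A∩B) − 1. -/
/-!
Outside the backbone `f_k` is `-x ^ |S|` with `x = k + 2`. If `A ∪ B` leaves the backbone
and strictly contains `A` and `B`, then either `A ∩ B` also leaves it and convexity of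
`m ↦ x ^ m` gives `x^|A| + x^|B| ≤ x^|A∪B| + x^|A∩B|`, or `f_k (A ∩ B) ≤ k` is dominated by
`x^|A∪B| - x^|A| - x^|B| ≥ x - 2 = k`. If `A ∪ B` is in the backbone, so are the other three
sets, and the inequality is a count over the blocks: with `a, b, u, n` the block counts of
`A, B, A ∪ B, A ∩ B` we have `a + b = u + n`, and since at most one block meets `A ∪ B` twice,
the maxima and the numbers of empty blocks each lose at most `1`.
-/

open Finset

theorem pow_add_pow_le_pow_add_pow {x : ℝ} (hx : 1 ≤ x) {a b u n : ℕ}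
    (hsum : a + b = u + n) (hna : n ≤ a) (hnb : n ≤ b) :
    x ^ a + x ^ b ≤ x ^ u + x ^ n := by
  obtain ⟨p, rfl⟩ := Nat.exists_eq_add_of_le hna
  obtain ⟨q, rfl⟩ := Nat.exists_eq_add_of_le hnb
  obtain rfl : u = n + p + q := by omega
  have hp : 1 ≤ x ^ p := one_le_pow₀ hx
  have hq : 1 ≤ x ^ q := one_le_pow₀ hx
  have : 0 ≤ x ^ n * ((x ^ p - 1) * (x ^ q - 1)) :=
    mul_nonneg (pow_nonneg (by linarith) n) (mul_nonneg (by linarith) (by linarith))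
  simp only [pow_add]
  nlinarith

theorem pow_add_pow_add_sub_two_le_pow {x : ℝ} (hx : 2 ≤ x) {a b u : ℕ}
    (ha : a < u) (hb : b < u) :
    x ^ a + x ^ b + (x - 2) ≤ x ^ u := by
  have hx1 : 1 ≤ x := by linarith
  have hma : x ^ a ≤ x ^ max a b := pow_le_pow_right₀ hx1 (le_max_left a b)
  have hmb : x ^ b ≤ x ^ max a b := pow_le_pow_right₀ hx1 (le_max_right a b)
  have hmu : x ^ (max a b + 1) ≤ x ^ u := pow_le_pow_right₀ hx1 (max_lt ha hb)
  have hm1 : 1 ≤ x ^ max a b := one_le_pow₀ hx1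
  rw [pow_succ] at hmu
  nlinarith

theorem approxSubmodular_of_pow_penalty {α : Type*} [DecidableEq α]
    (P : Finset α → Prop) (f : Finset α → ℝ) {x : ℝ} (hx : 2 ≤ x)
    (hpen : ∀ A, ¬P A → f A = -x ^ A.card)
    (hlow : ∀ A, P A → -1 ≤ f A) (hhigh : ∀ A, P A → f A ≤ x - 1)
    (hsub : ∀ A B, P (A ∪ B) → f (A ∪ B) + f (A ∩ B) - 1 ≤ f A + f B) (A B : Finset α) :
    f (A ∪ B) + f (A ∩ B) - 1 ≤ f A + f B := by
  by_cases hU : P (A ∪ B)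
  · exact hsub A B hU
  by_cases hBA : B ⊆ A
  · rw [union_eq_left.2 hBA, inter_eq_right.2 hBA]; linarith
  by_cases hAB : A ⊆ B
  · rw [union_eq_right.2 hAB, inter_eq_left.2 hAB]; linarith
  have hx1 : 1 ≤ x := by linarith
  have lower : ∀ T, -x ^ T.card ≤ f T := fun T => by
    by_cases hT : P T
    · linarith [hlow T hT, one_le_pow₀ (n := T.card) hx1]
    · rw [hpen T hT]
  have hA : A.card < (A ∪ B).card :=
    card_lt_card (ssubset_of_subset_of_ne subset_union_left fun h =>
      hBA (h ▸ subset_union_right))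
  have hB : B.card < (A ∪ B).card :=
    card_lt_card (ssubset_of_subset_of_ne subset_union_right fun h =>
      hAB (h ▸ subset_union_left))
  rw [hpen _ hU]
  by_cases hN : P (A ∩ B)
  · linarith [pow_add_pow_add_sub_two_le_pow hx hA hB, hhigh _ hN, lower A, lower B]
  · rw [hpen _ hN]
    linarith [pow_add_pow_le_pow_add_pow hx1 (card_union_add_card_inter A B).symm
      (card_le_card inter_subset_left) (card_le_card inter_subset_right), lower A, lower B]

section Score

variable {ι : Type*} [Fintype ι]

/-- For the block counts `i ↦ |A ∩ S_i|` of a covering family this is `M_A + Z_A - [A ≠ ∅]`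
(the truncated subtraction produces the correction term). -/
def score (c : ι → ℕ) : ℕ := (univ.sup c - 1) + #{i | c i = 0}

theorem card_filter_two_le_mono {c d : ι → ℕ} (h : c ≤ d) :
    #{i | 2 ≤ c i} ≤ #{i | 2 ≤ d i} :=
  card_le_card (monotone_filter_right _ fun i _ hi => hi.trans (h i))

variable {a b u n : ι → ℕ}

theorem le_one_of_two_le_of_ne (hu : #{i | 2 ≤ u i} ≤ 1) {i j : ι} (hi : 2 ≤ u i) (hj : j ≠ i) :
    u j ≤ 1 := by
  by_contra! h
  exact hj (card_le_one.1 hu j (by simp; omega) i (by simpa using hi))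

theorem card_zero_add_card_zero_le (hsum : a + b = u + n) (hna : n ≤ a)
    (hu : #{i | 2 ≤ u i} ≤ 1) :
    #{i | u i = 0} + #{i | n i = 0} ≤ #{i | a i = 0} + #{i | b i = 0} + 1 := by
  have hcoord : ∀ i, (if u i = 0 then 1 else 0) + (if n i = 0 then 1 else 0)
      ≤ (if a i = 0 then 1 else 0) + (if b i = 0 then 1 else 0) + (if 2 ≤ u i then 1 else 0) :=
    fun i => by
      have := congrFun hsum i
      have := hna i
      simp only [Pi.add_apply] at *
      split_ifs <;> omega
  simp only [card_filter] at hu ⊢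
  have := sum_le_sum fun i (_ : i ∈ univ) => hcoord i
  simp only [sum_add_distrib] at this
  omega

theorem sup_sub_one_add_sup_sub_one_le (hsum : a + b = u + n) (hna : n ≤ a) (hnb : n ≤ b)
    (hu : #{i | 2 ≤ u i} ≤ 1) :
    (univ.sup u - 1) + (univ.sup n - 1) ≤ (univ.sup a - 1) + (univ.sup b - 1) + 1 := by
  have hsum' : ∀ i, a i + b i = u i + n i := fun i => congrFun hsum i
  have hna : ∀ i, n i ≤ a i := hna
  have hnb : ∀ i, n i ≤ b i := hnb
  have ha : ∀ i, a i ≤ univ.sup a := fun i => le_sup (mem_univ i)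
  have hb : ∀ i, b i ≤ univ.sup b := fun i => le_sup (mem_univ i)
  by_cases hn : univ.sup n ≤ 1
  · have : univ.sup u - 1 ≤ (univ.sup a - 1) + (univ.sup b - 1) + 1 := by
      refine Nat.sub_le_of_le_add (Finset.sup_le fun j _ => ?_)
      have := hsum' j; have := hna j; have := hnb j; have := ha j; have := hb j
      omega
    omega
  -- a coordinate with `n i ≥ 2` has `u i ≥ 2`, so it is the only heavy one and both sups sit there
  obtain ⟨i, -, hi⟩ := (Finset.le_sup_iff (by norm_num : (⊥ : ℕ) < 2)).1 (not_le.1 hn)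
  have hui : 2 ≤ u i := by have := hsum' i; have := hna i; have := hnb i; omega
  have hsmall : ∀ j, j ≠ i → u j ≤ 1 := fun j => le_one_of_two_le_of_ne hu hui
  have hsu : univ.sup u ≤ u i := Finset.sup_le fun j _ => by
    by_cases hj : j = i
    · rw [hj]
    · have := hsmall j hj; omega
  have hsn : univ.sup n ≤ n i := Finset.sup_le fun j _ => by
    by_cases hj : j = i
    · rw [hj]
    · have := hsmall j hj; have := hsum' j; have := hna j; have := hnb j; omega
  have := hsum' i; have := ha i; have := hb i
  omega

theorem score_add_score_le (hsum : a + b = u + n) (hna : n ≤ a) (hnb : n ≤ b)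
    (hu : #{i | 2 ≤ u i} ≤ 1) :
    score u + score n ≤ score a + score b + 2 := by
  have := card_zero_add_card_zero_le hsum hna hu
  have := sup_sub_one_add_sup_sub_one_le hsum hna hnb hu
  unfold score
  omega

theorem score_le {c : ι → ℕ} {m : ℕ} (hc : ∀ i, c i ≤ m + 1) :
    score c ≤ m + Fintype.card ι := by
  have : univ.sup c ≤ m + 1 := Finset.sup_le fun i _ => hc i
  have : #{i | c i = 0} ≤ Fintype.card ι := card_filter_le _ _
  unfold score
  omega

end Score

section Blocks

variable {α ι : Type*} [DecidableEq α] (S : ι → Finset α)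

def blockCounts (T : Finset α) : ι → ℕ := fun i => #(T ∩ S i)

variable {S}

theorem blockCounts_mono {A B : Finset α} (h : A ⊆ B) : blockCounts S A ≤ blockCounts S B :=
  fun _ => card_le_card (inter_subset_inter h subset_rfl)

theorem blockCounts_add_blockCounts (A B : Finset α) :
    blockCounts S A + blockCounts S B = blockCounts S (A ∪ B) + blockCounts S (A ∩ B) :=
  funext fun i => by
    simp only [blockCounts, Pi.add_apply]
    rw [union_inter_distrib_right, inter_inter_distrib_right]
    exact (card_union_add_card_inter _ _).symm

theorem cast_score_blockCounts [Fintype α] [Fintype ι] (hcover : univ.biUnion S = univ)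
    (T : Finset α) :
    (score (blockCounts S T) : ℝ) = ((univ.sup fun i => #(T ∩ S i) : ℕ) : ℝ)
      + (#{i | T ∩ S i = ∅} : ℝ) - (if T ≠ ∅ then 1 else 0) := by
  unfold score blockCounts
  simp only [card_eq_zero]
  rcases T.eq_empty_or_nonempty with rfl | ⟨x, hx⟩
  · simp
  obtain ⟨i, -, hxi⟩ := mem_biUnion.1 (hcover ▸ mem_univ x : x ∈ univ.biUnion S)
  have : 1 ≤ univ.sup fun i => #(T ∩ S i) :=
    le_sup_of_le (mem_univ i) (card_pos.2 ⟨x, mem_inter.2 ⟨hx, hxi⟩⟩)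
  rw [if_pos (nonempty_iff_ne_empty.1 ⟨x, hx⟩)]
  push_cast [this]
  ring

theorem score_blockCounts_union_add_inter_le [Fintype ι] {A B : Finset α}
    (hU : #{i | 2 ≤ #((A ∪ B) ∩ S i)} ≤ 1) :
    score (blockCounts S (A ∪ B)) + score (blockCounts S (A ∩ B))
      ≤ score (blockCounts S A) + score (blockCounts S B) + 2 :=
  score_add_score_le (blockCounts_add_blockCounts A B) (blockCounts_mono inter_subset_left)
    (blockCounts_mono inter_subset_right) hU

theorem score_blockCounts_le [Fintype ι] {m : ℕ} (hS : ∀ i, #(S i) ≤ m + 1) (T : Finset α) :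
    score (blockCounts S T) ≤ m + Fintype.card ι :=
  score_le fun i => (card_le_card inter_subset_right).trans (hS i)

end Blocks

theorem stmt_7_general (k : ℕ)
    (S : Fin k → Finset (Fin (k * (k + 3) / 2)))
    (hcard : ∀ i, (S i).card = i.val + 2)
    (hcover : Finset.univ.biUnion S = Finset.univ)
    (fk : Finset (Fin (k * (k + 3) / 2)) → ℝ)
    (hfk : ∀ A,
      fk A =
        if (Finset.univ.filter (fun i => 2 ≤ (A ∩ S i).card)).card ≤ 1 then
          (((Finset.univ.sup (fun i => (A ∩ S i).card) : ℕ) : ℝ)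
            + ((Finset.univ.filter (fun i => A ∩ S i = ∅)).card : ℝ)
            - (if A ≠ ∅ then 1 else 0)) / 2
        else
          -((k : ℝ) + 2) ^ A.card) :
    ∀ A B, fk A + fk B ≥ fk (A ∪ B) + fk (A ∩ B) - 1 := by
  have hval : ∀ T, #{i | 2 ≤ #(T ∩ S i)} ≤ 1 → fk T = score (blockCounts S T) / 2 :=
    fun T hT => by rw [hfk, if_pos hT, cast_score_blockCounts hcover]
  have hscore : ∀ T, (score (blockCounts S T) : ℝ) ≤ k + k := fun T => by
    have := score_blockCounts_le (S := S) (m := k)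
      (fun i => by have := hcard i; have := i.isLt; omega) T
    exact_mod_cast (Fintype.card_fin k ▸ this)
  intro A B
  refine approxSubmodular_of_pow_penalty (fun T => #{i | 2 ≤ #(T ∩ S i)} ≤ 1) fk
    (x := (k : ℝ) + 2) (by linarith [(k.cast_nonneg : (0 : ℝ) ≤ k)])
    (fun T hT => by rw [hfk, if_neg hT]) (fun T hT => ?_) (fun T hT => ?_) (fun C D hU => ?_) A B
  · rw [hval T hT]; linarith [(score (blockCounts S T)).cast_nonneg (α := ℝ)]
  · rw [hval T hT]; linarith [hscore T]
  · have hmono := fun {E : Finset _} (h : E ⊆ C ∪ D) =>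
      (card_filter_two_le_mono (blockCounts_mono (S := S) h)).trans hU
    rw [hval C (hmono subset_union_left), hval D (hmono subset_union_right), hval _ hU,
      hval _ (hmono (inter_subset_left.trans subset_union_left))]
    have : (score (blockCounts S (C ∪ D)) : ℝ) + score (blockCounts S (C ∩ D))
        ≤ score (blockCounts S C) + score (blockCounts S D) + 2 := by
      exact_mod_cast score_blockCounts_union_add_inter_le hU
    linarith

theorem stmt_7 (k : ℕ) (hk : 1 ≤ k)
    (S : Fin k → Finset (Fin (k * (k + 3) / 2)))
    (hcard : ∀ i, (S i).card = i.val + 2)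
    (hdisj : ∀ i j, i ≠ j → Disjoint (S i) (S j))
    (hcover : Finset.univ.biUnion S = Finset.univ)
    (fk : Finset (Fin (k * (k + 3) / 2)) → ℝ)
    (hfk : ∀ A,
      fk A =
        if (Finset.univ.filter (fun i => 2 ≤ (A ∩ S i).card)).card ≤ 1 then
          (((Finset.univ.sup (fun i => (A ∩ S i).card) : ℕ) : ℝ)
            + ((Finset.univ.filter (fun i => A ∩ S i = ∅)).card : ℝ)
            - (if A ≠ ∅ then 1 else 0)) / 2
        else
          -((k : ℝ) + 2) ^ A.card) :
    ∀ A B, fk A + fk B ≥ fk (A ∪ B) + fk (A ∩ B) - 1 :=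
  stmt_7_general k S hcard hcover fk hfk
end

section
/- If A∪B belongs to the backbone 𝓑, then Z_A + Z_B ≥ Z_{A∪B} + Z_{A∩B} − 1, where Z_S = #{i ∈ [k] : S ∩ S_i = ∅}. -/
/-! A part missed by `A ∪ B` is missed by both `A` and `B`, so `Z_{A∪B}` counts the parts missed
by both. A part missed by `A ∩ B` but met by both `A` and `B` meets `A ∪ B` in two distinct points;
since `A ∪ B ∈ 𝓑` there is at most one such part, and inclusion–exclusion for the parts missed by
`A` and by `B` gives the inequality. -/

open Finset

namespace Finset

variable {α : Type*} [DecidableEq α]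

theorem card_union_inter_eq_add_of_inter_inter_eq_empty {A B T : Finset α}
    (h : A ∩ B ∩ T = ∅) : ((A ∪ B) ∩ T).card = (A ∩ T).card + (B ∩ T).card := by
  rw [union_inter_distrib_right]
  refine card_union_of_disjoint (disjoint_iff_inter_eq_empty.2 ?_)
  rwa [← inter_inter_distrib_right]

theorem two_le_card_union_inter {A B T : Finset α} (h : A ∩ B ∩ T = ∅)
    (hA : (A ∩ T).Nonempty) (hB : (B ∩ T).Nonempty) : 2 ≤ ((A ∪ B) ∩ T).card := by
  rw [card_union_inter_eq_add_of_inter_inter_eq_empty h]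
  have := hA.card_pos
  have := hB.card_pos
  omega

end Finset

section Parts

variable {ι α : Type*} [Fintype ι] [DecidableEq α] (S : ι → Finset α) (A B : Finset α)

/-- `Z_A = #(missedParts S A)`. -/
def missedParts : Finset ι := univ.filter fun i => A ∩ S i = ∅

/-- `A ∈ 𝓑` means `#(crowdedParts S A) ≤ 1`. -/
def crowdedParts : Finset ι := univ.filter fun i => 2 ≤ (A ∩ S i).card

theorem missedParts_union [DecidableEq ι] :
    missedParts S (A ∪ B) = missedParts S A ∩ missedParts S B := by
  ext i
  simp [missedParts, union_inter_distrib_right]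

theorem missedParts_inter_subset [DecidableEq ι] :
    missedParts S (A ∩ B) ⊆ missedParts S A ∪ missedParts S B ∪ crowdedParts S (A ∪ B) := by
  intro i hi
  simp only [missedParts, crowdedParts, mem_union, mem_filter, mem_univ, true_and] at hi ⊢
  by_contra! h
  exact h.2.not_ge (two_le_card_union_inter hi h.1.1 h.1.2)

theorem card_missedParts_union_add_card_missedParts_inter_le [DecidableEq ι] :
    (missedParts S (A ∪ B)).card + (missedParts S (A ∩ B)).card
      ≤ (missedParts S A).card + (missedParts S B).card + (crowdedParts S (A ∪ B)).card := by
  have hsub := card_le_card (missedParts_inter_subset S A B)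
  have := card_union_le (missedParts S A ∪ missedParts S B) (crowdedParts S (A ∪ B))
  have := card_union_add_card_inter (missedParts S A) (missedParts S B)
  rw [missedParts_union]
  omega

end Parts

theorem stmt_8_general {α : Type*} [DecidableEq α] (k : ℕ)
    (S : Fin k → Finset α)
    (A B : Finset α)
    (hAB : (Finset.univ.filter (fun i => 2 ≤ ((A ∪ B) ∩ S i).card)).card ≤ 1) :
    ((Finset.univ.filter (fun i => A ∩ S i = ∅)).card : ℤ)
      + ((Finset.univ.filter (fun i => B ∩ S i = ∅)).card : ℤ)
    ≥ ((Finset.univ.filter (fun i => (A ∪ B) ∩ S i = ∅)).card : ℤ)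
      + ((Finset.univ.filter (fun i => (A ∩ B) ∩ S i = ∅)).card : ℤ) - 1 := by
  have h := card_missedParts_union_add_card_missedParts_inter_le S A B
  change (crowdedParts S (A ∪ B)).card ≤ 1 at hAB
  change ((missedParts S A).card : ℤ) + (missedParts S B).card
    ≥ (missedParts S (A ∪ B)).card + (missedParts S (A ∩ B)).card - 1
  omega

theorem stmt_8 {α : Type*} [Fintype α] [DecidableEq α] (k : ℕ)
    (S : Fin k → Finset α)
    (hdisj : ∀ i j, i ≠ j → Disjoint (S i) (S j))
    (hcover : Finset.univ.biUnion S = Finset.univ)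
    (A B : Finset α)
    (hAB : (Finset.univ.filter (fun i => 2 ≤ ((A ∪ B) ∩ S i).card)).card ≤ 1) :
    ((Finset.univ.filter (fun i => A ∩ S i = ∅)).card : ℤ)
      + ((Finset.univ.filter (fun i => B ∩ S i = ∅)).card : ℤ)
    ≥ ((Finset.univ.filter (fun i => (A ∪ B) ∩ S i = ∅)).card : ℤ)
      + ((Finset.univ.filter (fun i => (A ∩ B) ∩ S i = ∅)).card : ℤ) - 1 :=
  stmt_8_general k S A B hAB
end

section
/- If A∪B belongs to the backbone 𝓑, then M_A + M_B ≥ M_{A∪B} + M_{A∩B} − [A∩B ≠ ∅], where M_S = max_{i∈[k]} |S∩S_i|. -/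
theorem stmt_9 {α : Type*} [Fintype α] [DecidableEq α] (k : ℕ)
    (S : Fin k → Finset α)
    (hdisj : ∀ i j, i ≠ j → Disjoint (S i) (S j))
    (hcover : Finset.univ.biUnion S = Finset.univ)
    (A B : Finset α)
    (hAB : (Finset.univ.filter (fun i => 2 ≤ ((A ∪ B) ∩ S i).card)).card ≤ 1) :
    (((Finset.univ.sup (fun i => (A ∩ S i).card) : ℕ) : ℤ)
      + ((Finset.univ.sup (fun i => (B ∩ S i).card) : ℕ) : ℤ))
    ≥ ((Finset.univ.sup (fun i => ((A ∪ B) ∩ S i).card) : ℕ) : ℤ)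
      + ((Finset.univ.sup (fun i => ((A ∩ B) ∩ S i).card) : ℕ) : ℤ)
      - (if A ∩ B ≠ ∅ then 1 else 0) := by
  classical
  have F1 : Finset.univ.sup (fun i => ((A ∪ B) ∩ S i).card)
      ≤ Finset.univ.sup (fun i => (A ∩ S i).card)
        + Finset.univ.sup (fun i => (B ∩ S i).card) := by
    apply Finset.sup_le
    intro i _
    calc ((A ∪ B) ∩ S i).card = ((A ∩ S i) ∪ (B ∩ S i)).card := by
          rw [Finset.union_inter_distrib_right]
      _ ≤ (A ∩ S i).card + (B ∩ S i).card := Finset.card_union_le _ _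
      _ ≤ _ := add_le_add
            (Finset.le_sup (f := fun i => (A ∩ S i).card) (Finset.mem_univ i))
            (Finset.le_sup (f := fun i => (B ∩ S i).card) (Finset.mem_univ i))
  by_cases h : A ∩ B = ∅
  · simp only [h, ne_eq, not_true_eq_false, if_false, Finset.empty_inter,
      Finset.card_empty]
    have he : Finset.univ.sup (fun _ : Fin k => 0) = 0 :=
      Nat.le_zero.mp (Finset.sup_le fun _ _ => le_refl 0)
    rw [he]
    omega
  · simp only [ne_eq, h, not_false_eq_true, if_true]
    obtain ⟨x, hx⟩ := Finset.nonempty_iff_ne_empty.mpr h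
    have hx2 : x ∈ Finset.univ.biUnion S := by rw [hcover]; exact Finset.mem_univ x
    obtain ⟨i0, -, -⟩ := Finset.mem_biUnion.mp hx2
    haveI : Nonempty (Fin k) := ⟨i0⟩
    obtain ⟨is, -, hni⟩ := Finset.exists_mem_eq_sup Finset.univ Finset.univ_nonempty
      (fun i => ((A ∩ B) ∩ S i).card)
    have hunion : (A ∩ S is) ∪ (B ∩ S is) = (A ∪ B) ∩ S is := by
      rw [Finset.union_inter_distrib_right]
    have hinter : (A ∩ S is) ∩ (B ∩ S is) = (A ∩ B) ∩ S is := by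
      ext y; simp [Finset.mem_inter]
    have F2 : ((A ∪ B) ∩ S is).card + ((A ∩ B) ∩ S is).card
        ≤ Finset.univ.sup (fun i => (A ∩ S i).card)
          + Finset.univ.sup (fun i => (B ∩ S i).card) := by
      have := Finset.card_union_add_card_inter (A ∩ S is) (B ∩ S is)
      rw [hunion, hinter] at this
      rw [this]
      exact add_le_add
        (Finset.le_sup (f := fun i => (A ∩ S i).card) (Finset.mem_univ is))
        (Finset.le_sup (f := fun i => (B ∩ S i).card) (Finset.mem_univ is))
    have Fmono : Finset.univ.sup (fun i => ((A ∩ B) ∩ S i).card)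
        ≤ Finset.univ.sup (fun i => ((A ∪ B) ∩ S i).card) := by
      apply Finset.sup_le
      intro i _
      exact le_trans (Finset.card_le_card
        (Finset.inter_subset_inter Finset.inter_subset_union (subset_refl _)))
        (Finset.le_sup (f := fun i => ((A ∪ B) ∩ S i).card) (Finset.mem_univ i))
    have F3 : Finset.univ.sup (fun i => ((A ∪ B) ∩ S i).card) ≤ ((A ∪ B) ∩ S is).card
        ∨ Finset.univ.sup (fun i => ((A ∪ B) ∩ S i).card) ≤ 1
        ∨ Finset.univ.sup (fun i => ((A ∩ B) ∩ S i).card) ≤ 1 := by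
      by_cases h2 : 2 ≤ ((A ∪ B) ∩ S is).card
      · obtain ⟨j, -, hj⟩ := Finset.exists_mem_eq_sup Finset.univ Finset.univ_nonempty
          (fun i => ((A ∪ B) ∩ S i).card)
        by_cases h3 : 2 ≤ ((A ∪ B) ∩ S j).card
        · have hji : j ∈ Finset.univ.filter (fun i => 2 ≤ ((A ∪ B) ∩ S i).card) := by
            simp [h3]
          have hii : is ∈ Finset.univ.filter (fun i => 2 ≤ ((A ∪ B) ∩ S i).card) := by
            simp [h2]
          have : j = is := Finset.card_le_one.mp hAB j hji is hii
          left; rw [hj, this]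
        · right; left; rw [hj]; omega
      · right; right
        have : ((A ∩ B) ∩ S is).card ≤ ((A ∪ B) ∩ S is).card :=
          Finset.card_le_card (Finset.inter_subset_inter Finset.inter_subset_union
            (subset_refl _))
        rw [hni]; omega
    omega
end

section
/- For every odd n ≥ 1, the function f(S) = max(0, |S| − (n−1)/2) is at distance at least (n−1)/8 from every submodular function on 2^[n]. -/
/-!
Write `n = 2m + 1` and let `I_i^j = {i, i + 1, …, i + j - 1}` be a cyclic interval in `Fin n`.
Consecutive intervals satisfy `I_i^j ∪ I_{i+1}^j = I_i^{j+1}` and `I_i^j ∩ I_{i+1}^j = I_{i+1}^{j-1}`,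
so for a submodular `g` the sums `H j = ∑_i g (I_i^j)` form a concave sequence with `H 0 = n g ∅` and
`H n = n g univ`. Concavity at `j = m` gives `(m + 1) g ∅ + m g univ ≤ ∑_i g (I_i^m)`. If `g` were
within `ε = m / 4` of `f`, where `f ∅ = f (I_i^m) = 0` and `f univ = m + 1`, this would read
`m (m + 1) - (2m + 1) ε < (2m + 1) ε`, i.e. `m (m + 1) < m (2m + 1) / 2`, which is false.
-/

open Finset

lemma Fin.val_sub_one_eq_ite {n : ℕ} [NeZero n] (y : Fin n) :
    ((y - 1 : Fin n) : ℕ) = if (y : ℕ) = 0 then n - 1 else y - 1 := by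
  obtain ⟨k, rfl⟩ := Nat.exists_eq_succ_of_ne_zero (NeZero.ne n)
  simp only [Fin.coe_sub_one, Fin.ext_iff, Fin.val_zero, Nat.succ_sub_one]

def cyclicInterval {n : ℕ} (i : Fin n) (j : ℕ) : Finset (Fin n) :=
  {x | ((x - i : Fin n) : ℕ) < j}

section CyclicInterval

variable {n : ℕ} (i : Fin n) {j : ℕ}

@[simp]
lemma mem_cyclicInterval {x : Fin n} : x ∈ cyclicInterval i j ↔ ((x - i : Fin n) : ℕ) < j := by
  simp [cyclicInterval]

@[simp]
lemma cyclicInterval_zero : cyclicInterval i 0 = ∅ := by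
  ext; simp

@[simp]
lemma cyclicInterval_self : cyclicInterval i n = univ := by
  ext x; simp

variable [NeZero n]

lemma card_cyclicInterval (hj : j ≤ n) : #(cyclicInterval i j) = j := by
  calc #(cyclicInterval i j) = #{y : Fin n | (y : ℕ) < j} :=
        card_nbij' (· - i) (· + i) (fun x hx => by simpa using hx) (fun y hy => by simpa using hy)
          (fun x _ => by simp) (fun y _ => by simp)
    _ = j := by rw [Fin.card_filter_val_lt, min_eq_right hj]

lemma cyclicInterval_union_add_one (hj : 1 ≤ j) :
    cyclicInterval i j ∪ cyclicInterval (i + 1) j = cyclicInterval i (j + 1) := by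
  ext x
  simp only [mem_union, mem_cyclicInterval, ← sub_sub, Fin.val_sub_one_eq_ite]
  split_ifs <;> omega

lemma cyclicInterval_inter_add_one (hj : j < n) :
    cyclicInterval i j ∩ cyclicInterval (i + 1) j = cyclicInterval (i + 1) (j - 1) := by
  ext x
  simp only [mem_inter, mem_cyclicInterval, ← sub_sub, Fin.val_sub_one_eq_ite]
  split_ifs <;> omega

end CyclicInterval

lemma chord_le_of_second_diff_nonpos {n k : ℕ} (h : ℕ → ℝ) (hk : k ≤ n)
    (hconc : ∀ j, j + 2 ≤ n → h (j + 2) + h j ≤ 2 * h (j + 1)) :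
    (n - k) * h 0 + k * h n ≤ n * h k := by
  set d : ℕ → ℝ := fun j => h (j + 1) - h j
  have hd : AntitoneOn d (Set.Iio n) := by
    refine antitoneOn_of_succ_le Set.ordConnected_Iio fun j _ _ hj => ?_
    have := hconc j (by simp only [Order.succ_eq_add_one, Set.mem_Iio] at hj; omega)
    simp only [d, Order.succ_eq_add_one]
    linarith
  -- every slope left of `k` is at least `d (k - 1)`, every slope right of it at most
  have hleft : k * d (k - 1) ≤ h k - h 0 := by
    have := card_nsmul_le_sum (range k) d (d (k - 1)) fun j hj => by
      simp only [mem_range] at hj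
      exact hd (by simp; omega) (by simp; omega) (by omega)
    rw [card_range, nsmul_eq_mul] at this
    exact this.trans_eq (sum_range_sub h k)
  have hright : h n - h k ≤ (n - k) * d (k - 1) := by
    have := sum_le_card_nsmul (Ico k n) d (d (k - 1)) fun j hj => by
      simp only [mem_Ico] at hj
      exact hd (by simp; omega) (by simp; omega) (by omega)
    rw [Nat.card_Ico, nsmul_eq_mul, Nat.cast_sub hk] at this
    exact (sum_Ico_sub h hk).symm.trans_le this
  have hk' : (k : ℝ) ≤ n := by exact_mod_cast hk
  linarith [mul_le_mul_of_nonneg_left hleft (sub_nonneg.2 hk'),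
    mul_le_mul_of_nonneg_left hright k.cast_nonneg]

section Submodular

variable {n : ℕ} [NeZero n] {g : Finset (Fin n) → ℝ}

lemma sum_cyclicInterval_second_diff_nonpos
    (hg : ∀ A B, g (A ∪ B) + g (A ∩ B) ≤ g A + g B) {j : ℕ} (hj : j + 2 ≤ n) :
    ∑ i, g (cyclicInterval i (j + 2)) + ∑ i, g (cyclicInterval i j) ≤
      2 * ∑ i, g (cyclicInterval i (j + 1)) := by
  have hshift : ∀ l, ∑ i, g (cyclicInterval (i + 1) l) = ∑ i, g (cyclicInterval i l) := fun l =>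
    Fintype.sum_equiv (Equiv.addRight 1) _ _ fun _ => rfl
  have hsub := sum_le_sum fun i (_ : i ∈ univ) =>
    hg (cyclicInterval i (j + 1)) (cyclicInterval (i + 1) (j + 1))
  simp only [cyclicInterval_union_add_one _ (Nat.le_add_left 1 j),
    cyclicInterval_inter_add_one _ (Nat.lt_of_add_one_le hj), Nat.add_sub_cancel,
    sum_add_distrib, hshift] at hsub
  linarith

theorem le_sum_cyclicInterval (hg : ∀ A B, g (A ∪ B) + g (A ∩ B) ≤ g A + g B) {k : ℕ}
    (hk : k ≤ n) : (n - k) * g ∅ + k * g univ ≤ ∑ i, g (cyclicInterval i k) := by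
  have := chord_le_of_second_diff_nonpos (fun j => ∑ i, g (cyclicInterval i j)) hk
    fun j hj => sum_cyclicInterval_second_diff_nonpos hg hj
  simp only [cyclicInterval_zero, cyclicInterval_self, sum_const, card_univ, Fintype.card_fin,
    nsmul_eq_mul] at this
  refine le_of_mul_le_mul_left ?_ (Nat.cast_pos.2 (Nat.pos_of_neZero n))
  linarith

end Submodular

theorem stmt_13_general (n : ℕ) (hodd : Odd n)
    (f : Finset (Fin n) → ℝ)
    (hf : ∀ S : Finset (Fin n), f S = max 0 ((S.card : ℝ) - ((n : ℝ) - 1) / 2)) :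
    ∀ g : Finset (Fin n) → ℝ,
      (∀ A B, g A + g B ≥ g (A ∪ B) + g (A ∩ B)) →
      ∃ S, |f S - g S| ≥ ((n : ℝ) - 1) / 8 := by
  intro g hg
  obtain ⟨m, rfl⟩ := hodd
  by_contra! hclose
  have hbounds : ∀ S, f S - m / 4 < g S ∧ g S < f S + m / 4 := fun S => by
    have := abs_sub_lt_iff.1 (hclose S)
    push_cast at this
    constructor <;> linarith
  have hempty : f ∅ = 0 := by rw [hf]; push_cast; simp
  have huniv : f univ = m + 1 := by
    rw [hf, card_univ, Fintype.card_fin, max_eq_right] <;> push_cast <;> linarith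
  have hhalf : ∀ i, f (cyclicInterval i m) = 0 := fun i => by
    rw [hf, card_cyclicInterval _ (by omega)]; push_cast; simp
  have hsum : ∑ i, g (cyclicInterval i m) < (2 * m + 1) * (m / 4) := by
    calc ∑ i, g (cyclicInterval i m) < ∑ _i : Fin (2 * m + 1), (m / 4 : ℝ) :=
          sum_lt_sum_of_nonempty univ_nonempty fun i _ => by
            linarith [(hbounds (cyclicInterval i m)).2, hhalf i]
      _ = _ := by simp
  have hconcave := le_sum_cyclicInterval hg (k := m) (by omega)
  push_cast at hconcave
  nlinarith [(hbounds ∅).1, (hbounds univ).1]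

theorem stmt_13 (n : ℕ) (hn : 1 ≤ n) (hodd : Odd n)
    (f : Finset (Fin n) → ℝ)
    (hf : ∀ S : Finset (Fin n), f S = max 0 ((S.card : ℝ) - ((n : ℝ) - 1) / 2)) :
    ∀ g : Finset (Fin n) → ℝ,
      (∀ A B, g A + g B ≥ g (A ∪ B) + g (A ∩ B)) →
      ∃ S, |f S - g S| ≥ ((n : ℝ) - 1) / 8 :=
  stmt_13_general n hodd f hf
end

section
/- For every n ≥ 1, the function f(S) = (n − 2|S|)²/8 is at distance at least (1/8)·⌊n²/2⌋ ≥ (n²−1)/16 from every submodular function on 2^[n]. -/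
theorem stmt_15 (n : ℕ) (hn : 1 ≤ n)
    (f : Finset (Fin n) → ℝ)
    (hf : ∀ S : Finset (Fin n), f S = ((n : ℝ) - 2 * S.card) ^ 2 / 8) :
    (∀ g : Finset (Fin n) → ℝ,
      (∀ A B, g A + g B ≥ g (A ∪ B) + g (A ∩ B)) →
      ∃ S, |f S - g S| ≥ (1/8) * ((⌊(n : ℝ)^2 / 2⌋ : ℤ) : ℝ)) ∧
    (1/8) * ((⌊(n : ℝ)^2 / 2⌋ : ℤ) : ℝ) ≥ ((n : ℝ)^2 - 1) / 16 := by
  -- floor computation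
  have hfloor : ((⌊(n : ℝ)^2 / 2⌋ : ℤ) : ℝ) * 2 = (n:ℝ)^2 - ((n % 2 : ℕ) : ℝ) := by
    obtain ⟨k, hk | hk⟩ := Nat.even_or_odd' n
    · rw [show ((n:ℕ):ℝ)^2/2 = ((2*k^2:ℤ):ℝ) by rw [hk]; push_cast; ring,
        Int.floor_intCast]
      rw [hk]; push_cast [Nat.mul_mod_right]; ring
    · rw [show ((n:ℕ):ℝ)^2/2 = ((2*k^2+2*k:ℤ):ℝ) + 1/2 by rw [hk]; push_cast; ring,
        Int.floor_intCast_add, show ⌊(1/2:ℝ)⌋ = 0 by norm_num]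
      have hm : (2*k+1) % 2 = 1 := by omega
      rw [hk, hm]; push_cast; ring
  have hmod : ((n % 2 : ℕ) : ℝ) ≤ 1 := by
    have : n % 2 ≤ 1 := by omega
    exact_mod_cast this
  constructor
  · intro g hg
    by_contra h
    push_neg at h
    set ε : ℝ := (1/8) * ((⌊(n : ℝ)^2 / 2⌋ : ℤ) : ℝ) with hε
    have hhalf : n / 2 < n := by omega
    set A : Finset (Fin n) := Finset.Iio ⟨n/2, hhalf⟩ with hA
    set B : Finset (Fin n) := Aᶜ with hB
    have hcardA : (A.card : ℕ) = n / 2 := by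
      rw [hA, Fin.card_Iio]
    have hcardB : (B.card : ℕ) = n - n / 2 := by
      rw [hB, Finset.card_compl, hcardA, Fintype.card_fin]
    have hAB : A ∪ B = Finset.univ := by rw [hB, Finset.union_compl]
    have hABi : A ∩ B = ∅ := by rw [hB, Finset.inter_compl]
    have hsub := hg A B
    rw [hAB, hABi] at hsub
    have h1 := abs_lt.mp (h A)
    have h2 := abs_lt.mp (h B)
    have h3 := abs_lt.mp (h Finset.univ)
    have h4 := abs_lt.mp (h ∅)
    have hfA : f A = ((n:ℝ) - 2 * (n/2 : ℕ)) ^ 2 / 8 := by rw [hf, hcardA]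
    have hfB : f B = ((n:ℝ) - 2 * ((n - n/2 : ℕ) : ℝ)) ^ 2 / 8 := by
      rw [hf, hcardB]
    have hfU : f Finset.univ = ((n:ℝ) - 2 * n) ^ 2 / 8 := by
      rw [hf]; norm_num
    have hfE : f (∅ : Finset (Fin n)) = ((n:ℝ) - 2 * 0) ^ 2 / 8 := by
      rw [hf]; norm_num
    -- express cast arithmetic
    have e1 : ((n - n/2 : ℕ) : ℝ) = (n : ℝ) - ((n/2 : ℕ) : ℝ) := by
      have : n / 2 ≤ n := by omega
      push_cast [this]; ring
    have e2 : (n:ℝ) - 2 * ((n/2 : ℕ) : ℝ) = ((n % 2 : ℕ) : ℝ) := by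
      have : n % 2 + 2 * (n/2) = n := by omega
      have h' : ((n % 2 : ℕ) : ℝ) + 2 * ((n/2 : ℕ) : ℝ) = (n : ℝ) := by
        exact_mod_cast congrArg (Nat.cast : ℕ → ℝ) this
      linarith
    rw [e1] at hfB
    have hfA' : f A = ((n % 2 : ℕ) : ℝ)^2 / 8 := by rw [hfA, e2]
    have hfB' : f B = ((n % 2 : ℕ) : ℝ)^2 / 8 := by
      rw [hfB]; rw [show (n:ℝ) - 2 * ((n:ℝ) - ((n/2:ℕ):ℝ)) = -((n:ℝ) - 2 * ((n/2:ℕ):ℝ)) by ring, e2]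
      rw [neg_pow]; norm_num
    have hm2 : ((n % 2 : ℕ) : ℝ)^2 = ((n % 2 : ℕ) : ℝ) := by
      have : n % 2 = 0 ∨ n % 2 = 1 := by omega
      rcases this with h' | h' <;> rw [h'] <;> norm_num
    rw [hm2] at hfA' hfB'
    -- contradiction
    have key : f A + f B + 2 * ε > f Finset.univ + f (∅ : Finset (Fin n)) - 2 * ε := by
      linarith [h1.1, h1.2, h2.1, h2.2, h3.1, h3.2, h4.1, h4.2, hsub]
    rw [hfA', hfB', hfU, hfE] at key
    have : 4 * ε = ((n:ℝ)^2 - ((n % 2 : ℕ) : ℝ)) / 2 := by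
      rw [hε]; linarith [hfloor]
    nlinarith [key, this]
  · nlinarith [hfloor, hmod]
end
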